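/- arXiv:2004.10790 — 2 statements merged into one kernel-verified Lean document; each statement's English description precedes it below -/
import Mathlib

section
/- Let $X$ be the periodic unit cube, $a,b$ smooth periodic coefficient fields with $a(x)$ of rank $m-1$ and the span of rows of $a(x)$ and $b(x)$ equal to $\mathbb{R}^m$ for all $x$, with dual fields $w, u$. Define for smooth periodic divergence-free currents $J, \tilde J : X \to \mathbb{R}^{D\times m}$ the bilinear form $\mathfrak{a}(J,\tilde J) = \langle J w^T, \tilde J w^T \rangle_{L^2} + \langle S(Ju^T), S(\tilde J u^T)\rangle_{L^2}$ where $S = (\eta^{1/2}\nabla, \zeta^{1/2}\nabla\cdot)^T$ with $\eta \ge \eta_0 > 0$ and $\zeta \ge 0$. Assume the oscillation condition: for constant $c\in\mathbb{R}^D$, $c\cdot\nabla b_j = 0$ a.e. for all $j$ implies $c=0$. Then $\mathfrak{a}$ is positive definite on the space of smooth periodic divergence-free currents, i.e., $\mathfrak{a}(J,J) = 0$ implies $J = 0$. -/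
open MeasureTheory

/-- Partial derivative `∂_i g (x)`. -/
noncomputable def pd {D : ℕ} (g : (Fin D → ℝ) → ℝ) (x : Fin D → ℝ) (i : Fin D) : ℝ :=
  fderiv ℝ g x (Pi.single i 1)

lemma my_fderiv_shift {D : ℕ} {g : (Fin D → ℝ) → ℝ} {c x : Fin D → ℝ}
    (hg : DifferentiableAt ℝ g (x + c)) :
    fderiv ℝ (fun y => g (y + c)) x = fderiv ℝ g (x + c) := by
  have h1 : HasFDerivAt (fun y : Fin D → ℝ => y + c) (ContinuousLinearMap.id ℝ _) x :=
    (hasFDerivAt_id x).add_const c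
  have := hg.hasFDerivAt.comp x h1
  simpa [Function.comp_def] using this.fderiv

lemma my_icc_sub : ∀ {D : ℕ}, Set.Icc (0 : Fin D → ℝ) 1 ⊆ closure (interior (Set.Icc (0 : Fin D → ℝ) 1)) := by
  intro D
  rw [show Set.Icc (0 : Fin D → ℝ) 1 = Set.pi Set.univ (fun _ => Set.Icc (0:ℝ) 1) from (Set.pi_univ_Icc _ _).symm]
  rw [interior_pi_set Set.finite_univ, closure_pi_set]
  simp [interior_Icc, closure_Ioo (zero_ne_one' ℝ)]

lemma my_zero_of_integral {D : ℕ} {f : (Fin D → ℝ) → ℝ} (hfC : Continuous f)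
    (hf0 : ∀ x, 0 ≤ f x)
    (hfP : ∀ (x : Fin D → ℝ) (n : Fin D → ℤ), f (x + fun i => (n i : ℝ)) = f x)
    (hI : ∫ x in Set.Icc (0 : Fin D → ℝ) 1, f x = 0) : ∀ x, f x = 0 := by
  have hint : IntegrableOn f (Set.Icc (0 : Fin D → ℝ) 1) :=
    hfC.continuousOn.integrableOn_compact isCompact_Icc
  have hae : f =ᵐ[volume.restrict (Set.Icc (0 : Fin D → ℝ) 1)] 0 :=
    (setIntegral_eq_zero_iff_of_nonneg_ae (Filter.Eventually.of_forall hf0) hint).mp hI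
  have hEq : Set.EqOn f 0 (Set.Icc (0 : Fin D → ℝ) 1) :=
    Measure.eqOn_of_ae_eq hae hfC.continuousOn continuousOn_const my_icc_sub
  intro x
  have hx : (fun i => Int.fract (x i)) ∈ Set.Icc (0 : Fin D → ℝ) 1 := by
    constructor <;> intro i
    · exact Int.fract_nonneg _
    · exact (Int.fract_lt_one _).le
  have : x = (fun i => Int.fract (x i)) + fun i => ((⌊x i⌋ : ℤ) : ℝ) := by
    funext i
    simp only [Pi.add_apply]
    rw [Int.fract]
    ring
  rw [this, hfP, hEq hx]; rfl

/-- On the periodic unit cube, with smooth periodic coefficients `a`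
(of rank `m-1`), `b`, dual fields `w, u` (so `aᵀw + bᵀu = I_m` pointwise), viscosity
coefficients `η ≥ η₀ > 0` (symmetric positive definite matrix) and `ζ ≥ 0`, and the
oscillation condition on `b`, the quadratic form
`𝔞(J,J) = ∫ (|Jwᵀ|² + ⟨∇(Juᵀ), η ∇(Juᵀ)⟩ + ζ (∇·(Juᵀ))²)`
is positive definite on smooth periodic divergence-free currents: `𝔞(J,J) = 0 → J = 0`.
(Here `m = k+1`.) -/
theorem stmt3 (D k : ℕ)
    (a : (Fin D → ℝ) → Fin k → Fin (k + 1) → ℝ)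
    (b : (Fin D → ℝ) → Fin (k + 1) → ℝ)
    (w : (Fin D → ℝ) → Fin k → Fin (k + 1) → ℝ)
    (u : (Fin D → ℝ) → Fin (k + 1) → ℝ)
    (η : (Fin D → ℝ) → Matrix (Fin D) (Fin D) ℝ)
    (ζ : (Fin D → ℝ) → ℝ) (η₀ : ℝ) (hη₀ : 0 < η₀)
    (hηsymm : ∀ x i i', η x i i' = η x i' i)
    (hη : ∀ (x : Fin D → ℝ) (ξ : Fin D → ℝ),
      η₀ * ∑ i, ξ i ^ 2 ≤ ∑ i, ∑ i', ξ i * η x i i' * ξ i')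
    (hζ : ∀ x, 0 ≤ ζ x)
    -- regularity of the coefficient fields
    (haC : ∀ i j, Continuous fun x => a x i j)
    (hbC : ∀ j, ContDiff ℝ 1 fun x => b x j)
    (hwC : ∀ i j, Continuous fun x => w x i j)
    (huC : ∀ j, ContDiff ℝ 1 fun x => u x j)
    (hηC : Continuous η) (hζC : Continuous ζ)
    -- periodicity of the coefficient fields
    (haP : ∀ (x : Fin D → ℝ) (n : Fin D → ℤ) i j, a (x + fun i' => (n i' : ℝ)) i j = a x i j)
    (hbP : ∀ (x : Fin D → ℝ) (n : Fin D → ℤ) j, b (x + fun i' => (n i' : ℝ)) j = b x j)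
    (hwP : ∀ (x : Fin D → ℝ) (n : Fin D → ℤ) i j, w (x + fun i' => (n i' : ℝ)) i j = w x i j)
    (huP : ∀ (x : Fin D → ℝ) (n : Fin D → ℤ) j, u (x + fun i' => (n i' : ℝ)) j = u x j)
    (hηP : ∀ (x : Fin D → ℝ) (n : Fin D → ℤ), η (x + fun i' => (n i' : ℝ)) = η x)
    (hζP : ∀ (x : Fin D → ℝ) (n : Fin D → ℤ), ζ (x + fun i' => (n i' : ℝ)) = ζ x)
    -- duality: `aᵀ w + bᵀ u = I_m` pointwise (encodes rank m-1 of `a` and full span of `a, b`)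
    (hdual : ∀ (x : Fin D → ℝ) (i j : Fin (k + 1)),
      (∑ r, a x r i * w x r j) + b x i * u x j = if i = j then (1 : ℝ) else 0)
    -- oscillation condition on `b`
    (hosc : ∀ c : Fin D → ℝ,
      (∀ j, ∀ᵐ x ∂(volume : Measure (Fin D → ℝ)),
        (∑ l, c l * pd (fun y => b y j) x l) = 0) → c = 0)
    -- a smooth periodic divergence-free current
    (J : (Fin D → ℝ) → Fin D → Fin (k + 1) → ℝ)
    (hJC : ∀ l j, ContDiff ℝ (⊤ : ℕ∞) fun x => J x l j)
    (hJP : ∀ (x : Fin D → ℝ) (n : Fin D → ℤ) l j, J (x + fun i' => (n i' : ℝ)) l j = J x l j)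
    (hJdiv : ∀ (j : Fin (k + 1)) (x : Fin D → ℝ), ∑ l, pd (fun y => J y l j) x l = 0)
    -- vanishing of the energy 𝔞(J,J)
    (hzero :
      (∫ x in Set.Icc (0 : Fin D → ℝ) 1,
        ((∑ l, ∑ i, (∑ j, J x l j * w x i j) ^ 2) +
          (∑ l, ∑ i, ∑ i',
            pd (fun y => ∑ j, J y l j * u y j) x i * η x i i' *
              pd (fun y => ∑ j, J y l j * u y j) x i') +
          ζ x * (∑ l, pd (fun y => ∑ j, J y l j * u y j) x l) ^ 2)) = 0) :
    ∀ x l j, J x l j = 0 := by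
  -- the scalar fields v_l = (J uᵀ)_l
  set v : (Fin D → ℝ) → Fin D → ℝ := fun x l => ∑ j, J x l j * u x j with hv_def
  have hvC : ∀ l, ContDiff ℝ 1 fun x => v x l := fun l =>
    ContDiff.sum fun j _ => ((hJC l j).of_le (by simp)).mul (huC j)
  have hvP : ∀ (x : Fin D → ℝ) (n : Fin D → ℤ) l, v (x + fun i' => (n i' : ℝ)) l = v x l := by
    intro x n l
    simp only [hv_def]
    exact Finset.sum_congr rfl fun j _ => by rw [hJP, huP]
  -- continuity and periodicity of pd v
  have hpdC : ∀ l i, Continuous fun x => pd (fun y => v y l) x i := by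
    intro l i
    exact ((hvC l).continuous_fderiv one_ne_zero).clm_apply continuous_const
  have hpdP : ∀ (x : Fin D → ℝ) (n : Fin D → ℤ) l i,
      pd (fun y => v y l) (x + fun i' => (n i' : ℝ)) i = pd (fun y => v y l) x i := by
    intro x n l i
    have hg : (fun y => v (y + fun i' => (n i' : ℝ)) l) = fun y => v y l :=
      funext fun y => hvP y n l
    unfold pd
    rw [← my_fderiv_shift (((hvC l).differentiable one_ne_zero) _), hg]
  have hηc : ∀ i i', Continuous fun x => η x i i' := fun i i' =>
    (continuous_apply i').comp ((continuous_apply i).comp hηC)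
  -- the integrand
  set f : (Fin D → ℝ) → ℝ := fun x =>
    ((∑ l, ∑ i, (∑ j, J x l j * w x i j) ^ 2) +
      (∑ l, ∑ i, ∑ i',
        pd (fun y => v y l) x i * η x i i' * pd (fun y => v y l) x i') +
      ζ x * (∑ l, pd (fun y => v y l) x l) ^ 2) with hf_def
  have hfC : Continuous f := by
    apply Continuous.add
    apply Continuous.add
    · exact continuous_finset_sum _ fun l _ => continuous_finset_sum _ fun i _ =>
        (continuous_finset_sum _ fun j _ => (hJC l j).continuous.mul (hwC i j)).pow 2
    · exact continuous_finset_sum _ fun l _ => continuous_finset_sum _ fun i _ =>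
        continuous_finset_sum _ fun i' _ => ((hpdC l i).mul (hηc i i')).mul (hpdC l i')
    · exact hζC.mul ((continuous_finset_sum _ fun l _ => hpdC l l).pow 2)
  have hf0 : ∀ x, 0 ≤ f x := by
    intro x
    have h1 : (0:ℝ) ≤ ∑ l, ∑ i, (∑ j, J x l j * w x i j) ^ 2 :=
      Finset.sum_nonneg fun l _ => Finset.sum_nonneg fun i _ => sq_nonneg _
    have h2 : (0:ℝ) ≤ ∑ l, ∑ i, ∑ i',
        pd (fun y => v y l) x i * η x i i' * pd (fun y => v y l) x i' := by
      apply Finset.sum_nonneg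
      intro l _
      refine le_trans ?_ (hη x (fun i => pd (fun y => v y l) x i))
      positivity
    have h3 : (0:ℝ) ≤ ζ x * (∑ l, pd (fun y => v y l) x l) ^ 2 :=
      mul_nonneg (hζ x) (sq_nonneg _)
    simp only [hf_def]
    linarith
  have hfP : ∀ (x : Fin D → ℝ) (n : Fin D → ℤ), f (x + fun i' => (n i' : ℝ)) = f x := by
    intro x n
    simp only [hf_def, hηP x n, hζP x n]
    congr 1
    congr 1
    · exact Finset.sum_congr rfl fun l _ => Finset.sum_congr rfl fun i _ => by
        rw [Finset.sum_congr rfl fun j _ => by rw [hJP, hwP]]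
    · exact Finset.sum_congr rfl fun l _ => Finset.sum_congr rfl fun i _ =>
        Finset.sum_congr rfl fun i' _ => by rw [hpdP x n l i, hpdP x n l i']
    · rw [Finset.sum_congr rfl fun l _ => hpdP x n l l]
  have hfz : ∀ x, f x = 0 := by
    apply my_zero_of_integral hfC hf0 hfP
    exact hzero
  -- extract the three vanishing terms pointwise
  have hterm : ∀ x, (∑ l, ∑ i, (∑ j, J x l j * w x i j) ^ 2) = 0 ∧
      (∑ l, ∑ i, ∑ i',
        pd (fun y => v y l) x i * η x i i' * pd (fun y => v y l) x i') = 0 := by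
    intro x
    have h1 : (0:ℝ) ≤ ∑ l, ∑ i, (∑ j, J x l j * w x i j) ^ 2 :=
      Finset.sum_nonneg fun l _ => Finset.sum_nonneg fun i _ => sq_nonneg _
    have h2 : (0:ℝ) ≤ ∑ l, ∑ i, ∑ i',
        pd (fun y => v y l) x i * η x i i' * pd (fun y => v y l) x i' := by
      apply Finset.sum_nonneg
      intro l _
      refine le_trans ?_ (hη x (fun i => pd (fun y => v y l) x i))
      positivity
    have h3 : (0:ℝ) ≤ ζ x * (∑ l, pd (fun y => v y l) x l) ^ 2 :=
      mul_nonneg (hζ x) (sq_nonneg _)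
    have hx := hfz x
    simp only [hf_def] at hx
    constructor <;> linarith
  -- J wᵀ = 0 pointwise
  have hJw : ∀ x l i, (∑ j, J x l j * w x i j) = 0 := by
    intro x l i
    have h := (hterm x).1
    rw [Finset.sum_eq_zero_iff_of_nonneg
      (fun l _ => Finset.sum_nonneg fun i _ => sq_nonneg _)] at h
    have h2 := h l (Finset.mem_univ l)
    rw [Finset.sum_eq_zero_iff_of_nonneg (fun i _ => sq_nonneg _)] at h2
    exact pow_eq_zero_iff two_ne_zero |>.mp (h2 i (Finset.mem_univ i))
  -- ∇(J uᵀ) = 0 pointwise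
  have hpd0 : ∀ x l i, pd (fun y => v y l) x i = 0 := by
    intro x l i
    have h := (hterm x).2
    have hql : ∀ l, (0:ℝ) ≤ ∑ i, ∑ i',
        pd (fun y => v y l) x i * η x i i' * pd (fun y => v y l) x i' := by
      intro l
      refine le_trans ?_ (hη x (fun i => pd (fun y => v y l) x i))
      positivity
    rw [Finset.sum_eq_zero_iff_of_nonneg (fun l _ => hql l)] at h
    have h2 := h l (Finset.mem_univ l)
    have h3 := hη x (fun i => pd (fun y => v y l) x i)
    rw [h2] at h3
    have h4 : (∑ i, pd (fun y => v y l) x i ^ 2) ≤ 0 := by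
      by_contra hcon
      push_neg at hcon
      nlinarith
    have h5 : (∑ i, pd (fun y => v y l) x i ^ 2) = 0 :=
      le_antisymm h4 (Finset.sum_nonneg fun i _ => sq_nonneg _)
    rw [Finset.sum_eq_zero_iff_of_nonneg (fun i _ => sq_nonneg _)] at h5
    exact pow_eq_zero_iff two_ne_zero |>.mp (h5 i (Finset.mem_univ i))
  -- v is constant
  have hfd0 : ∀ l x, fderiv ℝ (fun y => v y l) x = 0 := by
    intro l x
    apply ContinuousLinearMap.ext
    intro y
    have hy : y = ∑ i, y i • (Pi.single i (1:ℝ) : Fin D → ℝ) := by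
      funext j
      rw [Finset.sum_apply]
      simp [Pi.single_apply]
    rw [ContinuousLinearMap.zero_apply, hy, map_sum]
    apply Finset.sum_eq_zero
    intro i _
    have := hpd0 x l i
    unfold pd at this
    rw [ContinuousLinearMap.map_smul, this, smul_zero]
  have hconst : ∀ x l, v x l = v 0 l := fun x l =>
    is_const_of_fderiv_eq_zero ((hvC l).differentiable one_ne_zero) (hfd0 l) x 0
  -- duality identity: J = (J wᵀ) a + (J uᵀ) b = v ⊗ b
  have hJeq : ∀ x l j, J x l j = v 0 l * b x j := by
    intro x l j
    have key : (∑ r, (∑ j', J x l j' * w x r j') * a x r j)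
        + (∑ j', J x l j' * u x j') * b x j = J x l j := by
      have step1 : (∑ r, (∑ j', J x l j' * w x r j') * a x r j)
          + (∑ j', J x l j' * u x j') * b x j
          = ∑ j', J x l j' * ((∑ r, a x r j * w x r j') + b x j * u x j') := by
        simp only [Finset.sum_mul, Finset.mul_sum, mul_add, Finset.sum_add_distrib]
        congr 1
        · rw [Finset.sum_comm]
          exact Finset.sum_congr rfl fun j' _ => Finset.sum_congr rfl fun r _ => by ring
        · exact Finset.sum_congr rfl fun j' _ => by ring
      rw [step1]
      simp only [hdual]
      simp [mul_ite, Finset.sum_ite_eq]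
    rw [← key]
    rw [Finset.sum_eq_zero fun r _ => by rw [hJw x l r, zero_mul]]
    rw [zero_add, ← hconst x l]
  -- divergence-free condition on v ⊗ b
  have hdivb : ∀ (j : Fin (k+1)) (x : Fin D → ℝ),
      (∑ l, v 0 l * pd (fun y => b y j) x l) = 0 := by
    intro j x
    have hpdJ : ∀ l, pd (fun y => J y l j) x l = v 0 l * pd (fun y => b y j) x l := by
      intro l
      have hfun : (fun y => J y l j) = fun y => v 0 l * b y j := funext fun y => hJeq y l j
      rw [hfun]
      unfold pd
      rw [fderiv_const_mul (((hbC j).differentiable one_ne_zero) x)]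
      simp
    rw [← Finset.sum_congr rfl fun l _ => hpdJ l]
    exact hJdiv j x
  have hc : (fun l => v 0 l) = 0 :=
    hosc _ (fun j => Filter.Eventually.of_forall fun x => hdivb j x)
  intro x l j
  rw [hJeq x l j, congrFun hc l, Pi.zero_apply, zero_mul]
end

section
/- Uniqueness for the saddle point system: let $(\psi, v)$ be a smooth periodic solution of $\nabla\cdot(-(\nabla\psi)a^Ta + vb) = 0$ and $(\nabla\psi)b^T + Lv = 0$ with $L = S^TS$, such that $S v = 0$ and $(\nabla\psi)a^T = 0$. Assume $a$ has rank $m-1$ and the span of $a,b$ is $\mathbb{R}^m$ pointwise, and assume the oscillation condition on $b$ (for constant $c$, $c\cdot\nabla b_j = 0$ a.e. for all $j$ implies $c=0$). Then $v = 0$ and $\nabla\psi = 0$. -/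
open MeasureTheory

/-- uniqueness for the saddle point system: let `(ψ, v)` be a smooth
periodic solution of the conservation equation `∇·(-(∇ψ)aᵀa + vb) = 0` and the
momentum equation `(∇ψ)bᵀ + Lv = 0`, `L = -∇·η∇ - ∇ζ∇·`, such that `Sv = 0`
(energy components `⟨∇v_l, η ∇v_l⟩ = 0` and `ζ(∇·v)² = 0`) and `(∇ψ)aᵀ = 0`.
Assume `η ≥ η₀ > 0`, `ζ ≥ 0`, that the rows of `a(x)` and `b(x)` are linearly
independent (so `a` has rank `m-1` and the span of `a, b` is `ℝ^m`, with `m = k+1`),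
and the oscillation condition on `b`.  Then `v = 0` and `∇ψ = 0`. -/
theorem stmt18 (D k : ℕ)
    (a : (Fin D → ℝ) → Fin k → Fin (k + 1) → ℝ)
    (b : (Fin D → ℝ) → Fin (k + 1) → ℝ)
    (η : (Fin D → ℝ) → Matrix (Fin D) (Fin D) ℝ) (ζ : (Fin D → ℝ) → ℝ)
    (η₀ : ℝ) (hη₀ : 0 < η₀)
    (hη : ∀ (x : Fin D → ℝ) (ξ : Fin D → ℝ),
      η₀ * ∑ i, ξ i ^ 2 ≤ ∑ i, ∑ i', ξ i * η x i i' * ξ i')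
    (hζ : ∀ x, 0 ≤ ζ x)
    (haC : ∀ i j, Continuous fun x => a x i j)
    (hbC : ∀ j, ContDiff ℝ 1 fun x => b x j)
    (hηC : Continuous η) (hζC : ContDiff ℝ 1 ζ)
    (hrank : ∀ x : Fin D → ℝ,
      LinearIndependent ℝ (Sum.elim (fun i => a x i) (fun _ : Fin 1 => b x)))
    (hosc : ∀ c : Fin D → ℝ,
      (∀ j, ∀ᵐ x ∂(volume : Measure (Fin D → ℝ)),
        (∑ l, c l * pd (fun y => b y j) x l) = 0) → c = 0)
    (ψ : (Fin D → ℝ) → Fin (k + 1) → ℝ) (v : (Fin D → ℝ) → Fin D → ℝ)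
    (hψC : ∀ j, ContDiff ℝ (⊤ : ℕ∞) fun x => ψ x j)
    (hvC : ∀ l, ContDiff ℝ (⊤ : ℕ∞) fun x => v x l)
    (hψP : ∀ (x : Fin D → ℝ) (nn : Fin D → ℤ) l j,
      pd (fun y => ψ y j) (x + fun i => (nn i : ℝ)) l = pd (fun y => ψ y j) x l)
    (hvP : ∀ (x : Fin D → ℝ) (nn : Fin D → ℤ) l,
      v (x + fun i => (nn i : ℝ)) l = v x l)
    -- conservation equation: ∇·(-(∇ψ)aᵀa + vb) = 0
    (hcons : ∀ (kk : Fin (k + 1)) (x : Fin D → ℝ),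
      (∑ l, pd (fun y =>
        -(∑ i, (∑ j, pd (fun z => ψ z j) y l * a y i j) * a y i kk) +
          v y l * b y kk) x l) = 0)
    -- momentum equation: (∇ψ)bᵀ + Lv = 0
    (hmom : ∀ (l : Fin D) (x : Fin D → ℝ),
      (∑ j, pd (fun z => ψ z j) x l * b x j) +
        (-(∑ i, pd (fun y => ∑ i', η y i i' * pd (fun z => v z l) y i') x i) -
          pd (fun y => ζ y * ∑ i, pd (fun z => v z i) y i) x l) = 0)
    -- `S v = 0`
    (hSv1 : ∀ (x : Fin D → ℝ) (l : Fin D),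
      (∑ i, ∑ i', pd (fun z => v z l) x i * η x i i' * pd (fun z => v z l) x i') = 0)
    (hSv2 : ∀ x : Fin D → ℝ, ζ x * (∑ i, pd (fun z => v z i) x i) ^ 2 = 0)
    -- `(∇ψ) aᵀ = 0`
    (hAψ : ∀ (x : Fin D → ℝ) (l : Fin D) (i : Fin k),
      (∑ j, pd (fun z => ψ z j) x l * a x i j) = 0) :
    (∀ x l, v x l = 0) ∧ (∀ (x : Fin D → ℝ) (l : Fin D) (j : Fin (k + 1)),
      pd (fun z => ψ z j) x l = 0) := by
  classical
  -- Step 1: ∇v = 0 pointwise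
  have hpdv : ∀ (x : Fin D → ℝ) (l i : Fin D), pd (fun z => v z l) x i = 0 := by
    intro x l i
    have h1 := hSv1 x l
    have h2 := hη x (fun i => pd (fun z => v z l) x i)
    rw [h1] at h2
    have hsq : ∀ i' ∈ Finset.univ, (0:ℝ) ≤ pd (fun z => v z l) x i' ^ 2 :=
      fun i' _ => sq_nonneg _
    have hs0 : (∑ i', pd (fun z => v z l) x i' ^ 2) = 0 := by
      have hnn := Finset.sum_nonneg hsq
      nlinarith
    have := (Finset.sum_eq_zero_iff_of_nonneg hsq).1 hs0 i (Finset.mem_univ i)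
    exact pow_eq_zero_iff (two_ne_zero) |>.1 this
  have hdv : ∀ l, Differentiable ℝ (fun z => v z l) := fun l => (hvC l).differentiable (by simp)
  -- fderiv of v is zero
  have hfd : ∀ (l : Fin D) (x : Fin D → ℝ), fderiv ℝ (fun z => v z l) x = 0 := by
    intro l x
    ext w
    have hw : w = ∑ i, w i • (Pi.single i 1 : Fin D → ℝ) := by
      funext j
      simp [Finset.sum_apply, Pi.single_apply, Finset.sum_ite_eq' Finset.univ j]
    rw [hw]
    simp only [map_sum, _root_.map_smul]
    have : ∀ i : Fin D, fderiv ℝ (fun z => v z l) x (Pi.single i 1) = 0 := fun i => hpdv x l i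
    simp [this]
  have hvconst : ∀ (x : Fin D → ℝ) (l : Fin D), v x l = v 0 l :=
    fun x l => is_const_of_fderiv_eq_zero (hdv l) (hfd l) x 0
  -- Step 2: momentum equation gives (∇ψ) bᵀ = 0
  have hψb : ∀ (x : Fin D → ℝ) (l : Fin D), (∑ j, pd (fun z => ψ z j) x l * b x j) = 0 := by
    intro x l
    have h := hmom l x
    have e1 : ∀ i : Fin D,
        (fun y => ∑ i', η y i i' * pd (fun z => v z l) y i') = fun _ : Fin D → ℝ => (0:ℝ) := by
      intro i; funext y; simp [hpdv]
    have e2 : (fun y => ζ y * ∑ i, pd (fun z => v z i) y i) = fun _ : Fin D → ℝ => (0:ℝ) := by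
      funext y; simp [hpdv]
    have ez : ∀ (x : Fin D → ℝ) (i : Fin D), pd (fun _ : Fin D → ℝ => (0:ℝ)) x i = 0 := by
      intro x i; simp [pd]
    rw [e2] at h
    simp only [e1, ez] at h
    simpa using h
  -- Step 3: linear algebra: ∇ψ = 0
  have hψ0 : ∀ (x : Fin D → ℝ) (l : Fin D) (j : Fin (k+1)), pd (fun z => ψ z j) x l = 0 := by
    intro x l j0
    set c : Fin (k+1) → ℝ := fun j => pd (fun z => ψ z j) x l with hc
    set φ : (Fin (k+1) → ℝ) →ₗ[ℝ] ℝ := ∑ j, c j • LinearMap.proj j with hφdef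
    have hφ_apply : ∀ w : Fin (k+1) → ℝ, φ w = ∑ j, c j * w j := by
      intro w; simp [hφdef]
    have hspan : Submodule.span ℝ
        (Set.range (Sum.elim (fun i => a x i) (fun _ : Fin 1 => b x))) = ⊤ := by
      apply (hrank x).span_eq_top_of_card_eq_finrank
      simp [Module.finrank_fin_fun]
    have hφ0 : φ = 0 := by
      apply LinearMap.ext_on_range hspan
      intro i
      rcases i with i | i
      · simpa [hφ_apply] using hAψ x l i
      · simpa [hφ_apply] using hψb x l
    have hcc : (∑ j, c j * c j) = 0 := by
      have := congrArg (fun f : (Fin (k+1) → ℝ) →ₗ[ℝ] ℝ => f c) hφ0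
      simpa [hφ_apply] using this
    have hcj : c j0 = 0 := by
      have hnn : ∀ j ∈ Finset.univ, (0:ℝ) ≤ c j * c j := fun j _ => mul_self_nonneg _
      have := (Finset.sum_eq_zero_iff_of_nonneg hnn).1 hcc j0 (Finset.mem_univ j0)
      exact mul_self_eq_zero.1 this
    exact hcj
  -- Step 4: conservation equation gives v0 · ∇b = 0
  have hkey : ∀ (kk : Fin (k+1)) (x : Fin D → ℝ),
      (∑ l, v 0 l * pd (fun y => b y kk) x l) = 0 := by
    intro kk x
    have h := hcons kk x
    have e : ∀ l : Fin D,
        (fun y => -(∑ i, (∑ j, pd (fun z => ψ z j) y l * a y i j) * a y i kk) +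
          v y l * b y kk) = fun y => v 0 l * b y kk := by
      intro l; funext y
      simp [hψ0, hvconst y l]
    simp only [e] at h
    have e2 : ∀ l : Fin D, pd (fun y => v 0 l * b y kk) x l
        = v 0 l * pd (fun y => b y kk) x l := by
      intro l
      unfold pd
      rw [fderiv_const_mul (((hbC kk).differentiable one_ne_zero) x)]
      simp
    simp only [e2] at h
    exact h
  have hv0 : v 0 = 0 := by
    apply hosc
    intro j
    exact Filter.Eventually.of_forall (fun x => hkey j x)
  constructor
  · intro x l
    rw [hvconst x l, hv0]
    simp
  · exact hψ0
end
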